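/- arXiv:2410.20440 — 2 statements merged into one kernel-verified Lean document; each statement's English description precedes it below -/
import Mathlib

section
/- Let A be a left brace. Then for every a, b ∈ A and every natural number m ≥ 1: a^{∘m} * b = Σ_{j=1}^{m} C(m, j)·e'_j(a, b), and a^{∘m} = Σ_{j=1}^{m} C(m, j)·e'_j(a), where e'_1(a) = a and e'_{j+1}(a) = a * e'_j(a), and C(m, j) denotes the binomial coefficient. -/
/-- A left brace: `(A, +)` abelian group, `(A, ∘)` a group (with identity `cone`
and inverse `cinv`), satisfying `a ∘ (b + c) + a = a ∘ b + a ∘ c`. -/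
class LeftBrace (A : Type*) extends AddCommGroup A where
  circ : A → A → A
  cone : A
  cinv : A → A
  circ_assoc : ∀ a b c : A, circ (circ a b) c = circ a (circ b c)
  circ_cone : ∀ a : A, circ a cone = a
  cone_circ : ∀ a : A, circ cone a = a
  circ_cinv : ∀ a : A, circ a (cinv a) = cone
  cinv_circ : ∀ a : A, circ (cinv a) a = cone
  circ_add : ∀ a b c : A, circ a (b + c) + a = circ a b + circ a c

namespace LeftBrace

variable {A : Type*} [LeftBrace A]

/-- The brace operation `a * b = a ∘ b - a - b`. -/
def bstar (a b : A) : A := circ a b - a - b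

/-- `ann (p^i) = {a : p^i • a = 0}`. -/
def ann (p i : ℕ) : Set A := {a : A | (p ^ i : ℕ) • a = 0}

/-- `p^i • A = {p^i • a : a ∈ A}`. -/
def pA (p i : ℕ) : Set A := Set.range (fun a : A => (p ^ i : ℕ) • a)

/-- An ideal of a left brace: an additive subgroup closed under `*` on both sides. -/
def IsIdeal (I : Set A) : Prop :=
  (0 : A) ∈ I ∧ (∀ x ∈ I, ∀ y ∈ I, x + y ∈ I) ∧ (∀ x ∈ I, -x ∈ I) ∧
  (∀ a : A, ∀ x ∈ I, bstar a x ∈ I) ∧ (∀ a : A, ∀ x ∈ I, bstar x a ∈ I)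

/-- `eIter a b m = e'_m(a,b)` for `m ≥ 1`, with `eIter a b 0 = b`;
so `e'_1(a,b) = a * b` and `e'_{m+1}(a,b) = a * e'_m(a,b)`. -/
def eIter (a b : A) : ℕ → A
  | 0 => b
  | m + 1 => bstar a (eIter a b m)

/-- `circPow a j = a^{∘ j}`, the `j`-fold `∘`-product of `a` with itself. -/
def circPow (a : A) : ℕ → A
  | 0 => cone
  | j + 1 => circ a (circPow a j)

/-- Property 1 (with `c = ⌊(p-1)/4⌋`). -/
def Property1 (p : ℕ) (A : Type*) [LeftBrace A] : Prop :=
  (∀ a b : A, eIter a b ((p - 1) / 4) ∈ pA p 1) ∧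
  (∀ i : ℕ, 1 ≤ i → ∀ a : A, ∀ b ∈ ann p i, eIter a b ((p - 1) / 4) ∈ ann p (i - 1))

end LeftBrace

open LeftBrace

section Aux

variable {A : Type*} [LeftBrace A]

lemma circ_zero' (a : A) : circ a (0 : A) = a := by
  have h := circ_add a (0 : A) (0 : A)
  rw [add_zero] at h
  exact (add_left_cancel h).symm

lemma circ_add' (a x y : A) : circ a (x + y) = circ a x + circ a y - a := by
  rw [eq_sub_iff_add_eq]
  exact circ_add a x y

/-- `bstar a` as an additive homomorphism. -/
def bstarHom (a : A) : A →+ A where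
  toFun := bstar a
  map_zero' := by simp [bstar, circ_zero']
  map_add' x y := by
    simp only [bstar, circ_add' a x y]
    abel

lemma bstarHom_apply (a x : A) : bstarHom a x = bstar a x := rfl

/-- The lambda map `x ↦ a ∘ x - a` is additive; key composition identity. -/
lemma bstar_circ (x y b : A) :
    bstar (circ x y) b = bstar x (bstar y b) + bstar x b + bstar y b := by
  have hneg : ∀ u : A, circ x (-u) = x + x - circ x u := by
    intro u
    have h := circ_add' x u (-u)
    rw [add_neg_cancel, circ_zero'] at h
    have h3 : circ x u + circ x (-u) = x + x := by
      rw [eq_sub_iff_add_eq] at h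
      exact h.symm
    rw [eq_sub_iff_add_eq, add_comm]
    exact h3
  have h1 : circ x (circ y b - y - b) = circ x (circ y b) - circ x y + x - circ x b + x := by
    have e1 : circ y b - y - b = circ y b + (-y + -b) := by abel
    rw [e1, circ_add' x (circ y b) (-y + -b), circ_add' x (-y) (-b), hneg y, hneg b]
    abel
  simp only [bstar, circ_assoc]
  rw [h1]; abel

/-- Pascal-style sum identity over `Icc 1 m`. -/
lemma pascal_sum (f : ℕ → A) (m : ℕ) :
    ∑ j ∈ Finset.Icc 1 (m + 1), ((m + 1).choose j) • f j
      = (∑ j ∈ Finset.Icc 1 m, (m.choose j) • f (j + 1)) + f 1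
        + ∑ j ∈ Finset.Icc 1 m, (m.choose j) • f j := by
  have hIcc : ∀ (n : ℕ) (g : ℕ → A),
      ∑ j ∈ Finset.Icc 1 n, g j = ∑ i ∈ Finset.range n, g (i + 1) := by
    intro n g
    rw [← Finset.Ico_add_one_right_eq_Icc, Finset.sum_Ico_eq_sum_range]
    simp [add_comm]
  rw [hIcc, hIcc, hIcc]
  have key : ∀ i, ((m + 1).choose (i + 1)) • f (i + 1)
      = (m.choose i) • f (i + 1) + (m.choose (i + 1)) • f (i + 1) := by
    intro i
    rw [Nat.choose_succ_succ, add_smul]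
  simp only [key, Finset.sum_add_distrib]
  congr 1
  · rw [Finset.sum_range_succ']
    simp [add_comm]
  · rw [Finset.sum_range_succ, Nat.choose_succ_self]
    simp

end Aux

theorem statement5 {A : Type*} [LeftBrace A] (a b : A) (m : ℕ) (hm : 1 ≤ m) :
    bstar (circPow a m) b = ∑ j ∈ Finset.Icc 1 m, (m.choose j) • eIter a b j ∧
    circPow a m = ∑ j ∈ Finset.Icc 1 m, (m.choose j) • eIter a a (j - 1) := by
  induction m, hm using Nat.le_induction with
  | base =>
    constructor
    · simp [circPow, circ_cone, eIter]
    · simp [circPow, circ_cone, eIter]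
  | succ m hm ih =>
    obtain ⟨ih1, ih2⟩ := ih
    constructor
    · have h1 : circPow a (m + 1) = circ a (circPow a m) := rfl
      rw [h1, bstar_circ, ih1]
      have h2 : bstar a (∑ j ∈ Finset.Icc 1 m, (m.choose j) • eIter a b j)
          = ∑ j ∈ Finset.Icc 1 m, (m.choose j) • eIter a b (j + 1) := by
        rw [← bstarHom_apply, map_sum]
        refine Finset.sum_congr rfl fun j _ => ?_
        rw [map_nsmul, bstarHom_apply]
        rfl
      rw [h2, pascal_sum (fun j => eIter a b j) m]
      rfl
    · have h1 : circPow a (m + 1) = circ a (circPow a m) := rfl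
      have h2 : circ a (circPow a m) = bstar a (circPow a m) + a + circPow a m := by
        simp [bstar]; abel
      rw [h1, h2, ih2]
      have h3 : bstar a (∑ j ∈ Finset.Icc 1 m, (m.choose j) • eIter a a (j - 1))
          = ∑ j ∈ Finset.Icc 1 m, (m.choose j) • eIter a a j := by
        rw [← bstarHom_apply, map_sum]
        refine Finset.sum_congr rfl fun j hj => ?_
        rw [map_nsmul, bstarHom_apply]
        obtain ⟨hj1, _⟩ := Finset.mem_Icc.mp hj
        obtain ⟨k, rfl⟩ := Nat.exists_eq_succ_of_ne_zero (by omega : j ≠ 0)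
        rfl
      rw [h3]
      have h4 := pascal_sum (fun j => eIter a a (j - 1)) m
      simp only [Nat.add_sub_cancel] at h4
      rw [h4]
      simp [eIter]
end

section
/- Let A be a left brace of cardinality p^n for a prime p > 5 and a natural number n, satisfying Property 1. Let ρ_1, ρ_2 : p·A → A be any two functions with p·ρ_1(x) = x and p·ρ_2(x) = x for all x ∈ p·A. Then for all a ∈ A and b, c ∈ p·A: e'_{(p−1)/2}(a, ρ_1(b)) = e'_{(p−1)/2}(a, ρ_2(b)), and e'_{(p−1)/2}(a, ρ_1(b + c)) = e'_{(p−1)/2}(a, ρ_1(b)) + e'_{(p−1)/2}(a, ρ_1(c)). -/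
namespace LeftBrace

variable {A : Type*} [LeftBrace A]

lemma circ_zero' (a : A) : circ a 0 = a := by
  have h := circ_add a 0 0
  rw [add_zero] at h
  exact (add_left_cancel h).symm

lemma bstar_zero' (a : A) : bstar a 0 = 0 := by
  simp [bstar, circ_zero' a]

lemma bstar_add_right' (a x y : A) : bstar a (x + y) = bstar a x + bstar a y := by
  have h := circ_add a x y
  unfold bstar
  have h2 : circ a (x + y) = circ a x + circ a y - a := by
    rw [← h]; abel
  rw [h2]; abel

lemma eIter_add' (a x y : A) (m : ℕ) :
    eIter a (x + y) m = eIter a x m + eIter a y m := by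
  induction m with
  | zero => rfl
  | succ m ih => simp [eIter, ih, bstar_add_right']

lemma eIter_of_zero (a : A) (m : ℕ) : eIter a (0 : A) m = 0 := by
  induction m with
  | zero => rfl
  | succ m ih => simp [eIter, ih, bstar_zero']

lemma eIter_neg' (a x : A) (m : ℕ) : eIter a (-x) m = - eIter a x m := by
  have h := eIter_add' a x (-x) m
  rw [add_neg_cancel, eIter_of_zero] at h
  exact eq_neg_of_add_eq_zero_right h.symm

lemma eIter_eventually_zero (a d : A) (m k : ℕ) (hm : m ≤ k)
    (h : eIter a d m = 0) : eIter a d k = 0 := by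
  induction k with
  | zero => have hm0 : m = 0 := Nat.le_zero.mp hm; rw [← hm0]; exact h
  | succ k ih =>
    rcases Nat.lt_or_ge m (k+1) with hlt | hge
    · have := ih (by omega)
      simp [eIter, this, bstar_zero']
    · have : m = k + 1 := le_antisymm hm hge
      rw [← this]; exact h

lemma key_vanish (p : ℕ) (hP1 : Property1 p A) (a d : A) (hd : p • d = 0) :
    eIter a d ((p - 1) / 2) = 0 := by
  have hdann : d ∈ ann p 1 := by
    simp only [ann, Set.mem_setOf_eq, pow_one]
    exact hd
  have h0 := hP1.2 1 le_rfl a d hdann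
  simp only [ann, Set.mem_setOf_eq, Nat.sub_self, pow_zero, one_smul] at h0
  exact eIter_eventually_zero a d _ _ (Nat.div_le_div_left (by norm_num) (by norm_num)) h0

end LeftBrace

open LeftBrace

theorem statement10 {A : Type*} [LeftBrace A] [Fintype A] (p n : ℕ) (hp : p.Prime)
    (hp5 : 5 < p) (hcard : Fintype.card A = p ^ n) (hP1 : Property1 p A)
    (ρ₁ ρ₂ : A → A)
    (hρ₁ : ∀ x : A, x ∈ pA p 1 → p • ρ₁ x = x)
    (hρ₂ : ∀ x : A, x ∈ pA p 1 → p • ρ₂ x = x) :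
    ∀ a : A, ∀ b ∈ pA p 1, ∀ c ∈ pA p 1,
      eIter a (ρ₁ b) ((p - 1) / 2) = eIter a (ρ₂ b) ((p - 1) / 2) ∧
      eIter a (ρ₁ (b + c)) ((p - 1) / 2)
        = eIter a (ρ₁ b) ((p - 1) / 2) + eIter a (ρ₁ c) ((p - 1) / 2) := by
  intro a b hb c hc
  have hbc : b + c ∈ pA p 1 := by
    obtain ⟨x, hx⟩ := hb
    obtain ⟨y, hy⟩ := hc
    refine ⟨x + y, ?_⟩
    dsimp only at hx hy ⊢
    rw [smul_add, hx, hy]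
  constructor
  · have hd : p • (ρ₁ b + -(ρ₂ b)) = 0 := by
      rw [smul_add, smul_neg, hρ₁ b hb, hρ₂ b hb, add_neg_cancel]
    have h := key_vanish p hP1 a _ hd
    rw [eIter_add', eIter_neg'] at h
    have := eq_neg_of_add_eq_zero_left h
    rw [neg_neg] at this
    exact this
  · have hd : p • (ρ₁ (b + c) + -(ρ₁ b) + -(ρ₁ c)) = 0 := by
      rw [smul_add, smul_add, smul_neg, smul_neg, hρ₁ _ hbc, hρ₁ b hb, hρ₁ c hc]
      abel
    have h := key_vanish p hP1 a _ hd
    rw [eIter_add', eIter_add', eIter_neg', eIter_neg'] at h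
    rw [← sub_eq_zero, ← h]
    abel
end
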